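/- Let V be a maximal isotropic subspace with respect to ω, let ψ₀ be a stabilizer state for V, let (e_i, f_i), i : Fin N, be error spinor labels and (c_j, d_j), j : Fin K, be codeword spinor labels. Suppose that for any two distinct index pairs (i,j) ≠ (m,n) the combined labels lie in distinct cosets of V, i.e. (e_i + c_j + e_m + c_n, f_i + d_j + f_m + d_n) ∉ V. Then the N·K syndrome states σ(e_i,f_i).mulVec (σ(c_j,d_j).mulVec ψ₀) are pairwise orthogonal; hence the code spanned by the codewords σ(c_j,d_j).mulVec ψ₀ has distinguishable syndromes and corrects the error set {σ(e_i,f_i)}. (The error-correction condition, Eq. (5) of the paper.) -/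

import Mathlib

open Matrix BigOperators

/-- The mod-2 dot product of two bitstrings. -/
def dotp {p : ℕ} (a b : Fin p → ZMod 2) : ZMod 2 := ∑ i, a i * b i

/-- The sign `(-1)^t` for `t : ZMod 2`. -/
noncomputable def sgn (t : ZMod 2) : ℂ := (-1 : ℂ) ^ t.val

/-- The Pauli spinor matrix `σ(a,b)`, representing `⊗ᵢ X^(a i) Z^(b i)`:
`σ(a,b) x y = (-1)^(b⬝x)` if `y = x + a` and `0` otherwise. -/
noncomputable def pauli {p : ℕ} (a b : Fin p → ZMod 2) :
    Matrix (Fin p → ZMod 2) (Fin p → ZMod 2) ℂ :=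
  fun x y => if y = x + a then sgn (dotp b x) else 0

/-- The symplectic form `ω((a,b),(c,d)) = a⬝d + b⬝c` on pairs of bitstrings. -/
def omegaF {p : ℕ} (u v : (Fin p → ZMod 2) × (Fin p → ZMod 2)) : ZMod 2 :=
  dotp u.1 v.2 + dotp u.2 v.1

/-- A subspace is isotropic if `ω` vanishes on all pairs of its elements. -/
def IsIsotropic {p : ℕ}
    (V : Submodule (ZMod 2) ((Fin p → ZMod 2) × (Fin p → ZMod 2))) : Prop :=
  ∀ u ∈ V, ∀ v ∈ V, omegaF u v = 0

/-- A maximal isotropic subspace: isotropic and not properly contained in any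
isotropic subspace. -/
def IsMaxIsotropic {p : ℕ}
    (V : Submodule (ZMod 2) ((Fin p → ZMod 2) × (Fin p → ZMod 2))) : Prop :=
  IsIsotropic V ∧ ∀ W, IsIsotropic W → V ≤ W → W = V

/-! Pauli matrices multiply and take adjoints up to a phase, with labels adding, so the inner
product of the syndrome states `σ(e)σ(c)ψ₀` and `σ(e')σ(c')ψ₀` is a phase times
`⟪ψ₀, σ(z)ψ₀⟫` with `z = e + c + e' + c'`. If `z ∉ V`, maximality of `V` yields `u ∈ V` with
`ω(u, z) = 1`, so `σ(u)` anticommutes with `σ(z)`; as `σ(u)` is unitary and fixes `ψ₀`,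
`⟪ψ₀, σ(z)ψ₀⟫ = ⟪σ(u)ψ₀, σ(z)σ(u)ψ₀⟫ = -⟪ψ₀, σ(z)ψ₀⟫`. -/

lemma sgn_add (s t : ZMod 2) : sgn (s + t) = sgn s * sgn t := by
  rw [sgn, sgn, sgn, ZMod.val_add, ← pow_add, ← neg_one_pow_eq_pow_mod_two]

lemma sgn_zero : sgn 0 = 1 := by simp [sgn]

lemma sgn_one : sgn 1 = -1 := by simp [sgn, ZMod.val_one]

lemma sgn_mul_self (t : ZMod 2) : sgn t * sgn t = 1 := by
  rw [← sgn_add, ZModModule.add_self, sgn_zero]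

lemma star_sgn (t : ZMod 2) : star (sgn t) = sgn t := by simp [sgn]

section

variable {p : ℕ}

lemma dotp_comm (a b : Fin p → ZMod 2) : dotp a b = dotp b a := dotProduct_comm a b

lemma dotp_add_left (a b c : Fin p → ZMod 2) : dotp (a + b) c = dotp a c + dotp b c :=
  add_dotProduct a b c

lemma dotp_add_right (a b c : Fin p → ZMod 2) : dotp a (b + c) = dotp a b + dotp a c :=
  dotProduct_add a b c

lemma dotp_smul_left (s : ZMod 2) (a b : Fin p → ZMod 2) : dotp (s • a) b = s * dotp a b :=
  smul_dotProduct s a b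

lemma omegaF_comm (u v : (Fin p → ZMod 2) × (Fin p → ZMod 2)) :
    omegaF u v = omegaF v u := by
  rw [omegaF, omegaF, dotp_comm u.1, dotp_comm u.2, add_comm]

lemma omegaF_add_left (u v w : (Fin p → ZMod 2) × (Fin p → ZMod 2)) :
    omegaF (u + v) w = omegaF u w + omegaF v w := by
  simp only [omegaF, Prod.fst_add, Prod.snd_add, dotp_add_left]
  ring

lemma omegaF_add_right (u v w : (Fin p → ZMod 2) × (Fin p → ZMod 2)) :
    omegaF u (v + w) = omegaF u v + omegaF u w := by
  rw [omegaF_comm, omegaF_add_left, omegaF_comm v, omegaF_comm w]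

lemma omegaF_smul_left (s : ZMod 2) (u w : (Fin p → ZMod 2) × (Fin p → ZMod 2)) :
    omegaF (s • u) w = s * omegaF u w := by
  simp only [omegaF, Prod.smul_fst, Prod.smul_snd, dotp_smul_left]
  ring

lemma omegaF_smul_right (s : ZMod 2) (u w : (Fin p → ZMod 2) × (Fin p → ZMod 2)) :
    omegaF u (s • w) = s * omegaF u w := by
  rw [omegaF_comm, omegaF_smul_left, omegaF_comm w]

lemma omegaF_self (z : (Fin p → ZMod 2) × (Fin p → ZMod 2)) : omegaF z z = 0 := by
  rw [omegaF, dotp_comm z.2, ZModModule.add_self]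

lemma IsIsotropic.sup_span_singleton
    {V : Submodule (ZMod 2) ((Fin p → ZMod 2) × (Fin p → ZMod 2))} (hV : IsIsotropic V)
    {z : (Fin p → ZMod 2) × (Fin p → ZMod 2)} (hz : ∀ u ∈ V, omegaF u z = 0) :
    IsIsotropic (V ⊔ Submodule.span (ZMod 2) {z}) := by
  intro w₁ hw₁ w₂ hw₂
  obtain ⟨v₁, hv₁, y₁, hy₁, rfl⟩ := Submodule.mem_sup.mp hw₁
  obtain ⟨v₂, hv₂, y₂, hy₂, rfl⟩ := Submodule.mem_sup.mp hw₂
  obtain ⟨s₁, rfl⟩ := Submodule.mem_span_singleton.mp hy₁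
  obtain ⟨s₂, rfl⟩ := Submodule.mem_span_singleton.mp hy₂
  simp only [omegaF_add_left, omegaF_add_right, omegaF_smul_left, omegaF_smul_right]
  rw [hV v₁ hv₁ v₂ hv₂, hz v₁ hv₁, omegaF_comm z v₂, hz v₂ hv₂, omegaF_self]
  ring

lemma IsMaxIsotropic.exists_omegaF_eq_one
    {V : Submodule (ZMod 2) ((Fin p → ZMod 2) × (Fin p → ZMod 2))} (hV : IsMaxIsotropic V)
    {z : (Fin p → ZMod 2) × (Fin p → ZMod 2)} (hz : z ∉ V) :
    ∃ u ∈ V, omegaF u z = 1 := by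
  by_contra! h
  have hzero : ∀ u ∈ V, omegaF u z = 0 := fun u hu => by
    have : ∀ t : ZMod 2, t ≠ 1 → t = 0 := by decide
    exact this _ (h u hu)
  have hsup := hV.2 _ (hV.1.sup_span_singleton hzero) le_sup_left
  exact hz (hsup ▸ Submodule.mem_sup_right (Submodule.mem_span_singleton_self z))

lemma pauli_mul (a b c d : Fin p → ZMod 2) :
    pauli a b * pauli c d = sgn (dotp d a) • pauli (a + c) (b + d) := by
  ext x y
  rw [mul_apply, Finset.sum_eq_single (x + a) (fun j _ hj => by simp [pauli, hj])
    (by simp)]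
  simp only [pauli, if_pos, Matrix.smul_apply, smul_eq_mul, add_assoc, mul_ite, mul_zero]
  split_ifs
  · rw [dotp_add_right, dotp_add_left, sgn_add, sgn_add, dotp_comm d a]
    ring
  · rfl

lemma pauli_zero_zero : pauli (0 : Fin p → ZMod 2) 0 = 1 := by
  ext x y
  simp [pauli, one_apply, dotp, sgn_zero, eq_comm]

lemma conjTranspose_pauli (a b : Fin p → ZMod 2) :
    (pauli a b)ᴴ = sgn (dotp a b) • pauli a b := by
  ext x y
  simp only [conjTranspose_apply, pauli, Matrix.smul_apply, smul_eq_mul]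
  by_cases h : y = x + a
  · subst h
    rw [if_pos (by rw [add_assoc, ZModModule.add_self, add_zero]), if_pos rfl, star_sgn,
      dotp_add_right, sgn_add, dotp_comm b a, mul_comm]
  · have h' : x ≠ y + a := by
      rintro rfl
      exact h (by rw [add_assoc, ZModModule.add_self, add_zero])
    rw [if_neg h', if_neg h, star_zero, mul_zero]

lemma conjTranspose_pauli_mul_self (a b : Fin p → ZMod 2) : (pauli a b)ᴴ * pauli a b = 1 := by
  rw [conjTranspose_pauli, smul_mul_assoc, pauli_mul, smul_smul, dotp_comm b, sgn_mul_self,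
    ZModModule.add_self, ZModModule.add_self, pauli_zero_zero, one_smul]

lemma pauli_mul_comm (a b c d : Fin p → ZMod 2) :
    pauli c d * pauli a b = sgn (omegaF (a, b) (c, d)) • (pauli a b * pauli c d) := by
  rw [pauli_mul, pauli_mul, smul_smul, add_comm c, add_comm d]
  congr 1
  rw [omegaF, sgn_add, dotp_comm a d, mul_right_comm, sgn_mul_self, one_mul]

lemma star_mulVec_dotProduct_mulVec {n α : Type*} [Fintype n] [CommSemiring α] [StarRing α]
    (A B : Matrix n n α) (φ ψ : n → α) :
    star (A *ᵥ φ) ⬝ᵥ (B *ᵥ ψ) = star φ ⬝ᵥ ((Aᴴ * B) *ᵥ ψ) := by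
  rw [star_mulVec, ← dotProduct_mulVec, mulVec_mulVec]

def IsPauliUpToPhase (M : Matrix (Fin p → ZMod 2) (Fin p → ZMod 2) ℂ)
    (z : (Fin p → ZMod 2) × (Fin p → ZMod 2)) : Prop :=
  ∃ s : ℂ, M = s • pauli z.1 z.2

lemma isPauliUpToPhase_pauli (z : (Fin p → ZMod 2) × (Fin p → ZMod 2)) :
    IsPauliUpToPhase (pauli z.1 z.2) z :=
  ⟨1, (one_smul ℂ _).symm⟩

lemma IsPauliUpToPhase.mul {M N : Matrix (Fin p → ZMod 2) (Fin p → ZMod 2) ℂ}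
    {z w : (Fin p → ZMod 2) × (Fin p → ZMod 2)}
    (hM : IsPauliUpToPhase M z) (hN : IsPauliUpToPhase N w) :
    IsPauliUpToPhase (M * N) (z + w) := by
  obtain ⟨s, rfl⟩ := hM
  obtain ⟨t, rfl⟩ := hN
  exact ⟨s * t * sgn (dotp w.2 z.1), by
    rw [smul_mul_smul, pauli_mul, smul_smul, Prod.fst_add, Prod.snd_add]⟩

lemma IsPauliUpToPhase.conjTranspose {M : Matrix (Fin p → ZMod 2) (Fin p → ZMod 2) ℂ}
    {z : (Fin p → ZMod 2) × (Fin p → ZMod 2)} (hM : IsPauliUpToPhase M z) :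
    IsPauliUpToPhase Mᴴ z := by
  obtain ⟨s, rfl⟩ := hM
  exact ⟨star s * sgn (dotp z.1 z.2), by rw [conjTranspose_smul, conjTranspose_pauli, smul_smul]⟩

lemma star_dotProduct_pauli_mulVec_eq_zero
    {V : Submodule (ZMod 2) ((Fin p → ZMod 2) × (Fin p → ZMod 2))} (hV : IsMaxIsotropic V)
    {ψ₀ : (Fin p → ZMod 2) → ℂ} (hstab : ∀ u ∈ V, pauli u.1 u.2 *ᵥ ψ₀ = ψ₀)
    {z : (Fin p → ZMod 2) × (Fin p → ZMod 2)} (hz : z ∉ V) :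
    star ψ₀ ⬝ᵥ (pauli z.1 z.2 *ᵥ ψ₀) = 0 := by
  obtain ⟨u, hu, hω⟩ := hV.exists_omegaF_eq_one hz
  have hanti : pauli z.1 z.2 * pauli u.1 u.2 = -(pauli u.1 u.2 * pauli z.1 z.2) := by
    rw [pauli_mul_comm, hω, sgn_one, neg_one_smul]
  have hneg : star ψ₀ ⬝ᵥ (pauli z.1 z.2 *ᵥ ψ₀) = -(star ψ₀ ⬝ᵥ (pauli z.1 z.2 *ᵥ ψ₀)) :=
    calc star ψ₀ ⬝ᵥ (pauli z.1 z.2 *ᵥ ψ₀)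
        = star (pauli u.1 u.2 *ᵥ ψ₀) ⬝ᵥ (pauli z.1 z.2 *ᵥ (pauli u.1 u.2 *ᵥ ψ₀)) := by
          rw [hstab u hu]
      _ = star ψ₀ ⬝ᵥ (((pauli u.1 u.2)ᴴ * (pauli z.1 z.2 * pauli u.1 u.2)) *ᵥ ψ₀) := by
          rw [mulVec_mulVec, star_mulVec_dotProduct_mulVec]
      _ = -(star ψ₀ ⬝ᵥ (pauli z.1 z.2 *ᵥ ψ₀)) := by
          rw [hanti, mul_neg, ← mul_assoc, conjTranspose_pauli_mul_self, one_mul, neg_mulVec,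
            dotProduct_neg]
  exact CharZero.eq_neg_self_iff.mp hneg

lemma IsPauliUpToPhase.star_dotProduct_mulVec_eq_zero
    {V : Submodule (ZMod 2) ((Fin p → ZMod 2) × (Fin p → ZMod 2))} (hV : IsMaxIsotropic V)
    {ψ₀ : (Fin p → ZMod 2) → ℂ} (hstab : ∀ u ∈ V, pauli u.1 u.2 *ᵥ ψ₀ = ψ₀)
    {M : Matrix (Fin p → ZMod 2) (Fin p → ZMod 2) ℂ}
    {z : (Fin p → ZMod 2) × (Fin p → ZMod 2)} (hM : IsPauliUpToPhase M z) (hz : z ∉ V) :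
    star ψ₀ ⬝ᵥ (M *ᵥ ψ₀) = 0 := by
  obtain ⟨s, rfl⟩ := hM
  rw [smul_mulVec, dotProduct_smul, star_dotProduct_pauli_mulVec_eq_zero hV hstab hz, smul_zero]

end

theorem syndrome_states_orthogonal_general {p : ℕ}
    (V : Submodule (ZMod 2) ((Fin p → ZMod 2) × (Fin p → ZMod 2)))
    (hV : IsMaxIsotropic V) (ψ₀ : (Fin p → ZMod 2) → ℂ)
    (hstab : ∀ u ∈ V, (pauli u.1 u.2).mulVec ψ₀ = ψ₀)
    (N K : ℕ)
    (ef : Fin N → (Fin p → ZMod 2) × (Fin p → ZMod 2))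
    (cd : Fin K → (Fin p → ZMod 2) × (Fin p → ZMod 2))
    (hdist : ∀ (i : Fin N) (j : Fin K) (m : Fin N) (n : Fin K),
      (i, j) ≠ (m, n) → ef i + cd j + ef m + cd n ∉ V) :
    ∀ (i : Fin N) (j : Fin K) (m : Fin N) (n : Fin K), (i, j) ≠ (m, n) →
      (∑ x, (starRingEnd ℂ)
          ((pauli (ef i).1 (ef i).2).mulVec ((pauli (cd j).1 (cd j).2).mulVec ψ₀) x) *
        (pauli (ef m).1 (ef m).2).mulVec ((pauli (cd n).1 (cd n).2).mulVec ψ₀) x) = 0 := by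
  intro i j m n hne
  have hM : IsPauliUpToPhase
      ((pauli (ef i).1 (ef i).2 * pauli (cd j).1 (cd j).2)ᴴ *
        (pauli (ef m).1 (ef m).2 * pauli (cd n).1 (cd n).2))
      (ef i + cd j + ef m + cd n) := by
    simpa only [add_assoc] using
      ((isPauliUpToPhase_pauli (ef i)).mul (isPauliUpToPhase_pauli (cd j))).conjTranspose.mul
        ((isPauliUpToPhase_pauli (ef m)).mul (isPauliUpToPhase_pauli (cd n)))
  change star (_ *ᵥ (_ *ᵥ ψ₀)) ⬝ᵥ (_ *ᵥ (_ *ᵥ ψ₀)) = 0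
  rw [mulVec_mulVec, mulVec_mulVec, star_mulVec_dotProduct_mulVec]
  exact hM.star_dotProduct_mulVec_eq_zero hV hstab (hdist i j m n hne)

/-- Eq. (5) of the paper, the error-correction condition: Given a
stabilizer state `ψ₀` of a maximal isotropic subspace `V`, error labels `ef i` and
codeword labels `cd j` such that for distinct index pairs the combined labels lie in
distinct cosets of `V`, the `N·K` syndrome states
`σ(e_i,f_i).mulVec (σ(c_j,d_j).mulVec ψ₀)` are pairwise orthogonal; hence the code has
distinguishable syndromes and corrects the error set. -/
theorem syndrome_states_orthogonal {p : ℕ} (hp : 1 ≤ p)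
    (V : Submodule (ZMod 2) ((Fin p → ZMod 2) × (Fin p → ZMod 2)))
    (hV : IsMaxIsotropic V) (ψ₀ : (Fin p → ZMod 2) → ℂ) (hψ₀ : ψ₀ ≠ 0)
    (hstab : ∀ u ∈ V, (pauli u.1 u.2).mulVec ψ₀ = ψ₀)
    (N K : ℕ)
    (ef : Fin N → (Fin p → ZMod 2) × (Fin p → ZMod 2))
    (cd : Fin K → (Fin p → ZMod 2) × (Fin p → ZMod 2))
    (hdist : ∀ (i : Fin N) (j : Fin K) (m : Fin N) (n : Fin K),
      (i, j) ≠ (m, n) → ef i + cd j + ef m + cd n ∉ V) :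
    ∀ (i : Fin N) (j : Fin K) (m : Fin N) (n : Fin K), (i, j) ≠ (m, n) →
      (∑ x, (starRingEnd ℂ)
          ((pauli (ef i).1 (ef i).2).mulVec ((pauli (cd j).1 (cd j).2).mulVec ψ₀) x) *
        (pauli (ef m).1 (ef m).2).mulVec ((pauli (cd n).1 (cd n).2).mulVec ψ₀) x) = 0 :=
  syndrome_states_orthogonal_general V hV ψ₀ hstab N K ef cd hdist
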